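/- arXiv:1608.00806 — 3 statements merged into one kernel-verified Lean document; each statement's English description precedes it below -/
import Mathlib

section
/- For every real number t ≥ 0, one has ln(1 + t) = ∫_0^∞ (1 − e^{−z t}) e^{−z} / z dz, where the integral is a Lebesgue integral over (0, ∞). -/
/-!
The integrand equals `(e^{-z} - e^{-(1+t)z}) / z`, a Frullani integral for `f x = e^{-x}`, which
tends to `1` at `0⁺` and to `0` at `∞`; hence its value is `log ((1 + t) / 1)`. Integrability on
`(0, ∞)` comes from `0 ≤ e^{-az} - e^{-bz} = e^{-az} (1 - e^{-(b-a)z}) ≤ (b - a) z e^{-az}`.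
-/

open MeasureTheory Real Set

lemma norm_inv_mul_exp_neg_mul_sub_le {a b z : ℝ} (hab : a ≤ b) (hz : 0 < z) :
    ‖z⁻¹ * (exp (-(a * z)) - exp (-(b * z)))‖ ≤ (b - a) * exp (-(a * z)) := by
  have hsplit : exp (-(a * z)) - exp (-(b * z)) =
      exp (-(a * z)) * (1 - exp (-((b - a) * z))) := by
    rw [mul_sub, mul_one, ← exp_add]
    ring_nf
  have hnonneg : 0 ≤ 1 - exp (-((b - a) * z)) := by
    rw [sub_nonneg, exp_le_one_iff, neg_nonpos]
    exact mul_nonneg (sub_nonneg.2 hab) hz.le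
  rw [hsplit, norm_mul, norm_inv, Real.norm_of_nonneg hz.le,
    Real.norm_of_nonneg (mul_nonneg (exp_pos _).le hnonneg)]
  calc z⁻¹ * (exp (-(a * z)) * (1 - exp (-((b - a) * z))))
      ≤ z⁻¹ * (exp (-(a * z)) * ((b - a) * z)) := by
        gcongr
        linarith [one_sub_le_exp_neg ((b - a) * z)]
    _ = (b - a) * exp (-(a * z)) := by field_simp

lemma integrableOn_inv_mul_exp_neg_mul_sub {a b : ℝ} (ha : 0 < a) (hab : a ≤ b) :
    IntegrableOn (fun z ↦ z⁻¹ * (exp (-(a * z)) - exp (-(b * z)))) (Ioi 0) := by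
  have hdom : IntegrableOn (fun z ↦ (b - a) * exp (-(a * z))) (Ioi 0) := by
    have := (integrableOn_exp_mul_Ioi (neg_neg_of_pos ha) 0).const_mul (b - a)
    simp only [neg_mul] at this
    exact this
  refine hdom.mono' (by fun_prop) ?_
  filter_upwards [ae_restrict_mem measurableSet_Ioi] with z hz
  exact norm_inv_mul_exp_neg_mul_sub_le hab hz

theorem integral_inv_mul_exp_neg_mul_sub {a b : ℝ} (ha : 0 < a) (hab : a ≤ b) :
    ∫ z in Ioi 0, z⁻¹ * (exp (-(a * z)) - exp (-(b * z))) = log (b / a) := by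
  have hcont : Continuous fun x : ℝ ↦ exp (-x) := by fun_prop
  simpa using Frullani.integral_Ioi_eq (f := fun x ↦ exp (-x)) (L := 1) (R := 0)
    (hcont.locallyIntegrable.locallyIntegrableOn _) ha (ha.trans_le hab)
    (by simpa using hcont.continuousWithinAt.tendsto (x := 0) (s := Ioi 0))
    tendsto_exp_neg_atTop_nhds_zero (integrableOn_inv_mul_exp_neg_mul_sub ha hab)

/-- Integral representation of the logarithm (Hamdi's lemma):
for every `t ≥ 0`, `ln(1 + t) = ∫_0^∞ (1 − e^{−z t}) e^{−z} / z dz`. -/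
theorem log_one_add_eq_integral (t : ℝ) (ht : 0 ≤ t) :
    Real.log (1 + t) =
      ∫ z in Set.Ioi (0 : ℝ), (1 - Real.exp (-z * t)) * Real.exp (-z) / z := by
  have hintegrand : ∀ z : ℝ, (1 - exp (-z * t)) * exp (-z) / z
      = z⁻¹ * (exp (-(1 * z)) - exp (-((1 + t) * z))) := by
    intro z
    rw [one_mul, show -((1 + t) * z) = -z + -z * t by ring, exp_add]
    ring
  simp_rw [hintegrand, integral_inv_mul_exp_neg_mul_sub one_pos (le_add_of_nonneg_right ht),
    div_one]
end

section
/- Let ϱ > 0, d > 0, let α_L be a real number, and let α_N > 2. Then ∫_0^d ((d^{−α_L} − d^{−α_N}) r e^{−ϱ r} + d^{−α_N} r) dr + ∫_d^∞ ((r^{1−α_L} − r^{1−α_N}) e^{−ϱ r} + r^{1−α_N}) dr = ((1 − e^{−dϱ}(1 + dϱ))/ϱ²)·(d^{−α_L} − d^{−α_N}) + ϱ^{α_L − 2}·Γ(2 − α_L, dϱ) + α_N·d^{2−α_N}/(2(α_N − 2)) − ϱ^{α_N − 2}·Γ(2 − α_N, dϱ), where all integrals converge (are Lebesgue integrable on the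 indicated domains). -/
/-!
Split the integrand into its LoS and NLoS parts. On `(0, d]` everything is elementary: the
antiderivative of `r e^{-ϱ r}` is `-(ϱ r + 1) e^{-ϱ r} / ϱ²`. On `(d, ∞)` the substitution
`t = ϱ r` turns `∫ r^{1-α} e^{-ϱ r}` into `ϱ^{α-2} Γ(2 - α, dϱ)`, and the pure power `r^{1-α_N}`
integrates to `d^{2-α_N} / (α_N - 2)` because `α_N > 2`; combined with the `d^{-α_N} d² / 2` from
the near field this gives the term `α_N d^{2-α_N} / (2(α_N - 2))`.
-/

open MeasureTheory Real Set

noncomputable def incGamma (s x : ℝ) : ℝ :=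
  ∫ t in Set.Ioi x, t ^ (s - 1) * Real.exp (-t)

open Filter Asymptotics

theorem integrableOn_Ioi_rpow_mul_exp_neg_mul (s : ℝ) {b c : ℝ} (hb : 0 < b) (hc : 0 < c) :
    IntegrableOn (fun x : ℝ => x ^ s * exp (-b * x)) (Ioi c) := by
  refine integrable_of_isBigO_exp_neg (half_pos hb) ?_ ?_
  · exact (continuousOn_id.rpow_const fun x hx => Or.inl (hc.trans_le hx).ne').mul
      (by fun_prop)
  · have h := (isLittleO_rpow_exp_pos_mul_atTop s (half_pos hb)).isBigO.mul
      (isBigO_refl (fun x : ℝ => exp (-b * x)) atTop)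
    refine h.congr_right fun x => ?_
    rw [← exp_add]
    congr 1
    ring

theorem integral_Ioi_rpow_mul_exp_neg_mul (s : ℝ) {b c : ℝ} (hb : 0 < b) (hc : 0 ≤ c) :
    ∫ x in Ioi c, x ^ (s - 1) * exp (-b * x) = b ^ (-s) * incGamma s (c * b) := by
  have hsubst := integral_comp_mul_left_Ioi' (fun t => t ^ (s - 1) * exp (-t)) c hb
  rw [incGamma, mul_comm c b, ← hsubst, smul_eq_mul, ← mul_assoc, ← integral_const_mul]
  refine setIntegral_congr_fun measurableSet_Ioi fun x hx => ?_
  have hbs : b ^ (-s) * b * b ^ (s - 1) = 1 := by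
    rw [← rpow_add_one hb.ne', ← rpow_add hb]; norm_num
  rw [mul_rpow hb.le (hc.trans hx.le), neg_mul]
  linear_combination (-(x ^ (s - 1) * exp (-(b * x)))) * hbs

theorem integral_Ioc_mul_exp_neg_mul {b : ℝ} (hb : b ≠ 0) {c : ℝ} (hc : 0 ≤ c) :
    ∫ x in Ioc 0 c, x * exp (-b * x) = (1 - exp (-(c * b)) * (1 + c * b)) / b ^ 2 := by
  have hderiv : ∀ x ∈ uIcc 0 c,
      HasDerivAt (fun x => -(b * x + 1) * exp (-b * x) / b ^ 2) (x * exp (-b * x)) x := by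
    intro x _
    have hlin : HasDerivAt (fun x => -(b * x + 1)) (-b) x :=
      (((hasDerivAt_id' x).const_mul b).add_const 1).fun_neg.congr_deriv (by ring)
    have hexp : HasDerivAt (fun x => exp (-b * x)) (-b * exp (-b * x)) x := by
      simpa [mul_comm] using ((hasDerivAt_id x).const_mul (-b)).exp
    refine ((hlin.mul hexp).div_const (b ^ 2)).congr_deriv ?_
    field_simp
    ring
  have hcont : Continuous fun x => x * exp (-b * x) := by fun_prop
  rw [← intervalIntegral.integral_of_le hc,
    intervalIntegral.integral_eq_sub_of_hasDerivAt hderiv (hcont.intervalIntegrable 0 c)]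
  simp only [mul_zero, exp_zero]
  rw [mul_comm c b, ← neg_mul]
  ring

/-- Closed-form evaluation of the interference integral `Λ` (equation (12)) when the
LoS probability is `e^{−ϱ r}`. -/
theorem interference_integral_closed_form (ϱ d αL αN : ℝ)
    (hϱ : 0 < ϱ) (hd : 0 < d) (hαN : 2 < αN) :
    IntegrableOn
      (fun r : ℝ => (d ^ (-αL) - d ^ (-αN)) * r * Real.exp (-ϱ * r) + d ^ (-αN) * r)
      (Set.Ioc 0 d) ∧
    IntegrableOn
      (fun r : ℝ => (r ^ (1 - αL) - r ^ (1 - αN)) * Real.exp (-ϱ * r) + r ^ (1 - αN))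
      (Set.Ioi d) ∧
    (∫ r in Set.Ioc (0 : ℝ) d,
        ((d ^ (-αL) - d ^ (-αN)) * r * Real.exp (-ϱ * r) + d ^ (-αN) * r)) +
      (∫ r in Set.Ioi d,
        ((r ^ (1 - αL) - r ^ (1 - αN)) * Real.exp (-ϱ * r) + r ^ (1 - αN))) =
      ((1 - Real.exp (-(d * ϱ)) * (1 + d * ϱ)) / ϱ ^ 2) * (d ^ (-αL) - d ^ (-αN)) +
        ϱ ^ (αL - 2) * incGamma (2 - αL) (d * ϱ) +
        αN * d ^ (2 - αN) / (2 * (αN - 2)) -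
        ϱ ^ (αN - 2) * incGamma (2 - αN) (d * ϱ) := by
  have hL := integrableOn_Ioi_rpow_mul_exp_neg_mul (1 - αL) hϱ hd
  have hN := integrableOn_Ioi_rpow_mul_exp_neg_mul (1 - αN) hϱ hd
  have hpow := integrableOn_Ioi_rpow_of_lt (a := 1 - αN) (by linarith) hd
  have hfar : (fun r : ℝ => (r ^ (1 - αL) - r ^ (1 - αN)) * exp (-ϱ * r) + r ^ (1 - αN)) =
      fun r => r ^ (1 - αL) * exp (-ϱ * r) - r ^ (1 - αN) * exp (-ϱ * r) + r ^ (1 - αN) := by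
    ext r; ring
  refine ⟨Continuous.integrableOn_Ioc (by fun_prop), hfar ▸ (hL.fun_sub hN).add hpow, ?_⟩
  have hΓ (α : ℝ) : ∫ r in Ioi d, r ^ (1 - α) * exp (-ϱ * r) =
      ϱ ^ (α - 2) * incGamma (2 - α) (d * ϱ) := by
    rw [show 1 - α = 2 - α - 1 by ring, show α - 2 = -(2 - α) by ring]
    exact integral_Ioi_rpow_mul_exp_neg_mul (2 - α) hϱ hd.le
  have hnear : ∫ r in Ioc 0 d, ((d ^ (-αL) - d ^ (-αN)) * r * exp (-ϱ * r) + d ^ (-αN) * r) =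
      (d ^ (-αL) - d ^ (-αN)) * (∫ r in Ioc 0 d, r * exp (-ϱ * r)) +
        d ^ (-αN) * ∫ r in Ioc 0 d, r := by
    simp_rw [mul_assoc]
    rw [integral_add (Continuous.integrableOn_Ioc (by fun_prop))
      (Continuous.integrableOn_Ioc (by fun_prop)), integral_const_mul, integral_const_mul]
  rw [hnear, integral_Ioc_mul_exp_neg_mul hϱ.ne' hd.le, ← intervalIntegral.integral_of_le hd.le,
    integral_id, hfar, integral_add (hL.fun_sub hN) hpow, integral_sub hL hN, hΓ, hΓ,
    integral_Ioi_rpow_of_lt (by linarith) hd]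
  have hd2 : d ^ (2 - αN) = d ^ 2 * d ^ (-αN) := by
    rw [sub_eq_add_neg, rpow_add hd, rpow_two]
  have : αN - 2 ≠ 0 := by linarith
  have : 2 - αN ≠ 0 := by linarith
  rw [show 1 - αN + 1 = 2 - αN by ring, hd2]
  field_simp
  ring
end

section
/- Let N and N_e be positive integers, ρ > 0, and ξ, φ₁, φ₂ ∈ ℝ. Set K₃ = 2πρ(sin φ₁ − sin φ₂) and assume cos K₃ ≠ 1. Then |(1/√N)·a(ξ, N_e)ᴴ · (a(ξ, N_e) a(φ₁, N)ᴴ) · (1/√N)·a(φ₂, N)|² = (N_e/N)² · (1 − cos(N K₃))/(1 − cos K₃). -/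
open Complex Real Matrix

/-- ULA steering vector: the `k`-th entry is `exp(−i·2π·ρ·k·sin ψ)`. -/
noncomputable def steer (ρ ψ : ℝ) (q : ℕ) : Fin q → ℂ :=
  fun k => Complex.exp (-Complex.I * (2 * Real.pi * ρ * (k : ℕ) * Real.sin ψ))

/-!
The matched-filter gain factors as `(1/N) · (aₑᴴ aₑ) · (a₁ᴴ a₂)`. Each entry of a steering vector
has modulus one, so `aₑᴴ aₑ = Nₑ`, while `a₁ᴴ a₂ = ∑_{k<N} e^{i k K₃}` is a geometric sum with ratio
`e^{i K₃} ≠ 1`; its squared modulus is `|e^{i N K₃} - 1|² / |e^{i K₃} - 1|²`, and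
`|e^{iθ} - 1|² = 2 (1 - cos θ)`.
-/

theorem Matrix.dotProduct_vecMulVec_mulVec {m n α : Type*} [Fintype m] [Fintype n]
    [CommSemiring α] (x u : m → α) (v w : n → α) :
    x ⬝ᵥ (vecMulVec u v *ᵥ w) = (x ⬝ᵥ u) * (v ⬝ᵥ w) := by
  rw [vecMulVec_mulVec, op_smul_eq_smul, dotProduct_smul, smul_eq_mul, mul_comm]

theorem Complex.norm_exp_ofReal_mul_I_sub_one_sq (θ : ℝ) :
    ‖cexp (θ * I) - 1‖ ^ 2 = 2 * (1 - Real.cos θ) := by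
  rw [mul_comm, norm_exp_I_mul_ofReal_sub_one, norm_mul, mul_pow, Real.norm_eq_abs, sq_abs,
    Real.norm_eq_abs, sq_abs, Real.sin_sq, Real.cos_sq, mul_div_cancel₀ _ two_ne_zero]
  ring

theorem norm_sum_exp_mul_I_sq (n : ℕ) {K : ℝ} (hK : Real.cos K ≠ 1) :
    ‖∑ k : Fin n, cexp (↑((k : ℕ) * K) * I)‖ ^ 2 = (1 - Real.cos (n * K)) / (1 - Real.cos K) := by
  have hz : cexp (K * I) ≠ 1 := fun h => hK (by simpa using congrArg re h)
  have hgeom : ∑ k : Fin n, cexp (↑((k : ℕ) * K) * I) =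
      (cexp (↑(n * K) * I) - 1) / (cexp (K * I) - 1) := by
    rw [Fin.sum_univ_eq_sum_range (fun k => cexp (↑(k * K) * I)), ofReal_mul, ofReal_natCast,
      mul_assoc, Complex.exp_nat_mul, ← geom_sum_eq hz]
    refine Finset.sum_congr rfl fun k _ => ?_
    rw [ofReal_mul, ofReal_natCast, mul_assoc, Complex.exp_nat_mul]
  rw [hgeom, norm_div, div_pow, norm_exp_ofReal_mul_I_sub_one_sq,
    norm_exp_ofReal_mul_I_sub_one_sq, mul_div_mul_left _ _ two_ne_zero]

theorem star_steer_dotProduct_steer (ρ ψ₁ ψ₂ : ℝ) (q : ℕ) :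
    star (steer ρ ψ₁ q) ⬝ᵥ steer ρ ψ₂ q =
      ∑ k : Fin q, cexp (↑((k : ℕ) * (2 * π * ρ * (Real.sin ψ₁ - Real.sin ψ₂))) * I) := by
  refine Finset.sum_congr rfl fun k _ => ?_
  rw [Pi.star_apply, steer, steer, star_def, ← exp_conj, ← Complex.exp_add]
  congr 1
  simp only [map_mul, map_neg, conj_I, conj_ofReal, map_ofNat, ← ofReal_natCast]
  push_cast
  ring

theorem star_steer_dotProduct_self (ρ ψ : ℝ) (q : ℕ) :
    star (steer ρ ψ q) ⬝ᵥ steer ρ ψ q = q := by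
  simp [star_steer_dotProduct_steer]

theorem eavesdropper_gain_ULA_general (N Ne : ℕ)
    (ρ ξ φ₁ φ₂ K₃ : ℝ)
    (hK₃def : K₃ = 2 * Real.pi * ρ * (Real.sin φ₁ - Real.sin φ₂))
    (hK₃ : Real.cos K₃ ≠ 1) :
    ‖(dotProduct ((1 / (Real.sqrt N : ℂ)) • star (steer ρ ξ Ne))
        ((Matrix.vecMulVec (steer ρ ξ Ne) (star (steer ρ φ₁ N))).mulVec
          ((1 / (Real.sqrt N : ℂ)) • steer ρ φ₂ N)))‖ ^ 2 =
      ((Ne : ℝ) / N) ^ 2 * ((1 - Real.cos (N * K₃)) / (1 - Real.cos K₃)) := by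
  rw [smul_dotProduct, dotProduct_vecMulVec_mulVec, dotProduct_smul, star_steer_dotProduct_self,
    star_steer_dotProduct_steer, ← hK₃def, smul_eq_mul, smul_eq_mul, norm_mul, norm_mul,
    norm_mul, mul_pow, mul_pow, mul_pow, norm_sum_exp_mul_I_sq N hK₃]
  have hc : ‖(1 / (√N : ℂ))‖ ^ 2 = 1 / N := by
    rw [← ofReal_one, ← ofReal_div, norm_real, Real.norm_eq_abs, sq_abs, div_pow, one_pow,
      Real.sq_sqrt (Nat.cast_nonneg N)]
  rw [hc, Complex.norm_natCast]
  ring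

/-- Equation (25): the antenna gain seen by an eavesdropper with `N_e` antennas
applying matched filtering to the channel `a(ξ, N_e) a(φ₁, N)ᴴ` when the
transmitter with `N` antennas beamforms toward `φ₂`. -/
theorem eavesdropper_gain_ULA (N Ne : ℕ) (hN : 0 < N) (hNe : 0 < Ne)
    (ρ ξ φ₁ φ₂ K₃ : ℝ) (hρ : 0 < ρ)
    (hK₃def : K₃ = 2 * Real.pi * ρ * (Real.sin φ₁ - Real.sin φ₂))
    (hK₃ : Real.cos K₃ ≠ 1) :
    ‖(dotProduct ((1 / (Real.sqrt N : ℂ)) • star (steer ρ ξ Ne))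
        ((Matrix.vecMulVec (steer ρ ξ Ne) (star (steer ρ φ₁ N))).mulVec
          ((1 / (Real.sqrt N : ℂ)) • steer ρ φ₂ N)))‖ ^ 2 =
      ((Ne : ℝ) / N) ^ 2 * ((1 - Real.cos (N * K₃)) / (1 - Real.cos K₃)) :=
  eavesdropper_gain_ULA_general N Ne ρ ξ φ₁ φ₂ K₃ hK₃def hK₃
end
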